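/- arXiv:2310.11530 — 4 statements merged into one kernel-verified Lean document; each statement's English description precedes it below -/
import Mathlib

section
/- The variance (σ*)² = ∑_{j≥0} j²·w*_j − 1 of the α-shifted offspring distribution equals t*·θ''(t*)/θ'(t*). -/
/-!
On `(-ρ, ρ)` the series `θ` may be differentiated termwise, so `θ'` and `θ''` are the power series
with coefficients `(i + 1) w_{i+1}` and `(i + 1) (i + 2) w_{i+2}`. Writing `j² = j + j (j - 1)`
gives `∑ j² w*_j = C (θ'(t*) + t* θ''(t*))`, and `C θ'(t*) = 1`.
-/

open Filter Topology

/-- The offspring generating function `θ(t) = ∑ w_i t^i`. -/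
noncomputable def theta (w : ℕ → ℝ) (t : ℝ) : ℝ := ∑' i : ℕ, w i * t ^ i

section PowerSeries

variable {𝕜 : Type*} [RCLike 𝕜]

def derivCoeffs (a : ℕ → 𝕜) (i : ℕ) : 𝕜 := (i + 1) * a (i + 1)

variable {a : ℕ → 𝕜} {x z : 𝕜}

lemma summable_norm_derivCoeffs_mul_pow (ha : Summable fun i => a i * z ^ i) (hx : ‖x‖ < ‖z‖) :
    Summable fun i => ‖derivCoeffs a i * x ^ i‖ := by
  obtain ⟨M, hM⟩ := ha.tendsto_atTop_zero.norm.bddAbove_range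
  have hz : 0 < ‖z‖ := (norm_nonneg x).trans_lt hx
  set q := ‖x‖ / ‖z‖
  have hq0 : 0 ≤ q := by positivity
  have hq1 : q < 1 := (div_lt_one hz).2 hx
  have hgeom : Summable fun i : ℕ => ((i : ℝ) + 1) * q ^ i := by
    simpa [add_mul] using (summable_pow_mul_geometric_of_norm_lt_one 1
      (by rwa [Real.norm_of_nonneg hq0])).add (summable_geometric_of_lt_one hq0 hq1)
  refine .of_nonneg_of_le (fun _ => norm_nonneg _) (fun i => ?_) (hgeom.mul_left (M / ‖z‖))
  have hMi : ‖a (i + 1) * z ^ (i + 1)‖ ≤ M := hM ⟨i + 1, rfl⟩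
  have hxi : ‖x‖ ^ i = q ^ i * ‖z‖ ^ i := by rw [div_pow, div_mul_cancel₀ _ (by positivity)]
  calc ‖derivCoeffs a i * x ^ i‖
      = ‖a (i + 1) * z ^ (i + 1)‖ / ‖z‖ * (((i : ℝ) + 1) * q ^ i) := by
        rw [derivCoeffs, norm_mul, norm_mul, norm_mul, norm_pow, norm_pow, hxi,
          show ((i : 𝕜) + 1) = ((i + 1 : ℕ) : 𝕜) by push_cast; ring, RCLike.norm_natCast]
        field_simp
        push_cast
        ring
    _ ≤ M / ‖z‖ * (((i : ℝ) + 1) * q ^ i) := by gcongr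

lemma hasDerivAt_tsum_mul_pow (ha : Summable fun i => a i * z ^ i) (hx : ‖x‖ < ‖z‖) :
    HasDerivAt (fun y => ∑' i, a i * y ^ i) (∑' i, derivCoeffs a i * x ^ i) x := by
  obtain ⟨s, hxs, hsz⟩ := NormedField.exists_lt_norm_lt 𝕜 (norm_nonneg x) hx
  have hshift : ∀ i (y : 𝕜),
      a (i + 1) * ((i + 1 : ℕ) * y ^ (i + 1 - 1)) = derivCoeffs a i * y ^ i := fun i y => by
    simp only [derivCoeffs, Nat.add_sub_cancel]; push_cast; ring
  -- termwise differentiation on the ball of radius `‖s‖`, dominated by the derivative series at `s`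
  have hderiv := hasDerivAt_tsum_of_isPreconnected (t := Metric.ball 0 ‖s‖) (y₀ := 0)
    (g := fun i y => a i * y ^ i) (g' := fun i y => a i * (i * y ^ (i - 1)))
    (u := fun i => ‖a i * (i * s ^ (i - 1))‖)
    ((summable_nat_add_iff 1).mp <| by
      simpa only [hshift] using summable_norm_derivCoeffs_mul_pow ha hsz)
    Metric.isOpen_ball (convex_ball 0 _).isPreconnected
    (fun i y _ => (hasDerivAt_pow i y).const_mul (a i))
    (fun i y hy => by
      rw [mem_ball_zero_iff] at hy
      simp only [norm_mul, norm_pow]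
      gcongr)
    (Metric.mem_ball_self ((norm_nonneg x).trans_lt hxs))
    (summable_of_ne_finset_zero (s := {0}) fun i hi => by simp_all) (mem_ball_zero_iff.2 hxs)
  rwa [tsum_eq_zero_add' (by simpa only [hshift] using
      (summable_norm_derivCoeffs_mul_pow ha hx).of_norm),
    Nat.cast_zero, zero_mul, mul_zero, zero_add, tsum_congr (hshift · x)] at hderiv

lemma hasSum_derivCoeffs_mul_pow (ha : Summable fun i => a i * z ^ i) (hx : ‖x‖ < ‖z‖) :
    HasSum (fun i => derivCoeffs a i * x ^ i) (deriv (fun y => ∑' i, a i * y ^ i) x) := by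
  rw [(hasDerivAt_tsum_mul_pow ha hx).deriv]
  exact (summable_norm_derivCoeffs_mul_pow ha hx).of_norm.hasSum

lemma hasSum_derivCoeffs_derivCoeffs_mul_pow (ha : Summable fun i => a i * z ^ i)
    (hx : ‖x‖ < ‖z‖) :
    HasSum (fun i => derivCoeffs (derivCoeffs a) i * x ^ i)
      (deriv (deriv (fun y => ∑' i, a i * y ^ i)) x) := by
  have hderiv :
      deriv (fun y => ∑' i, a i * y ^ i) =ᶠ[𝓝 x] fun y => ∑' i, derivCoeffs a i * y ^ i := by
    filter_upwards [(isOpen_lt continuous_norm continuous_const).mem_nhds hx] with y hy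
    exact (hasDerivAt_tsum_mul_pow ha hy).deriv
  obtain ⟨s, hxs, hsz⟩ := NormedField.exists_lt_norm_lt 𝕜 (norm_nonneg x) hx
  rw [hderiv.deriv_eq]
  exact hasSum_derivCoeffs_mul_pow (summable_norm_derivCoeffs_mul_pow ha hsz).of_norm hxs

lemma hasSum_natCast_mul_mul_pow {b : ℕ → 𝕜} {S : 𝕜}
    (hb : HasSum (fun i => derivCoeffs b i * x ^ i) S) :
    HasSum (fun i : ℕ => (i : 𝕜) * b i * x ^ i) (x * S) := by
  refine (hasSum_nat_add_iff' 1).mp ?_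
  simpa [derivCoeffs, pow_succ, mul_assoc, mul_comm, mul_left_comm] using hb.mul_left x

lemma hasSum_sq_mul_of_eq_mul_pow_sub_one {v : ℕ → 𝕜} {C D₁ D₂ : 𝕜}
    (hv : ∀ j, 1 ≤ j → v j = C * a j * x ^ (j - 1))
    (h₁ : HasSum (fun i => derivCoeffs a i * x ^ i) D₁)
    (h₂ : HasSum (fun i => derivCoeffs (derivCoeffs a) i * x ^ i) D₂) :
    HasSum (fun j : ℕ => (j : 𝕜) ^ 2 * v j) (C * (D₁ + x * D₂)) := by
  have hterm : ∀ i : ℕ, ((i + 1 : ℕ) : 𝕜) ^ 2 * v (i + 1)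
      = C * (derivCoeffs a i * x ^ i + i * derivCoeffs a i * x ^ i) := fun i => by
    rw [hv (i + 1) (Nat.le_add_left 1 i), Nat.add_sub_cancel, derivCoeffs]
    push_cast
    ring
  refine (hasSum_nat_add_iff' 1).mp ?_
  simpa only [hterm, Finset.range_one, Finset.sum_singleton, Nat.cast_zero, zero_pow two_ne_zero,
    zero_mul, sub_zero] using (h₁.add (hasSum_natCast_mul_mul_pow h₂)).mul_left C

end PowerSeries

theorem alpha_shift_variance_general
    (w : ℕ → ℝ)
    (ρ : ℝ)
    (hρ_sum : ∀ t : ℝ, 0 ≤ t → t < ρ → Summable fun i : ℕ => w i * t ^ i)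
    (tstar : ℝ) (htstar : tstar ∈ Set.Ioo (0 : ℝ) ρ)
    (C : ℝ) (hCpos : 0 < C)
    (hC : C = 1 / deriv (theta w) tstar)
    (wstar : ℕ → ℝ)
    (hwstarj : ∀ j : ℕ, 1 ≤ j → wstar j = C * w j * tstar ^ (j - 1)) :
    (∑' j : ℕ, (j : ℝ) ^ 2 * wstar j) - 1 =
      tstar * deriv (deriv (theta w)) tstar / deriv (theta w) tstar := by
  obtain ⟨ht0, htρ⟩ := htstar
  obtain ⟨r, htr, hrρ⟩ := exists_between htρ
  have hr : Summable fun i => w i * r ^ i := hρ_sum r (ht0.trans htr).le hrρ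
  have ht : ‖tstar‖ < ‖r‖ := by
    rwa [Real.norm_of_nonneg ht0.le, Real.norm_of_nonneg (ht0.trans htr).le]
  have hθ' : deriv (theta w) tstar ≠ 0 := fun h => by
    rw [h, div_zero] at hC
    exact hCpos.ne' hC
  have hvar : HasSum (fun j : ℕ => (j : ℝ) ^ 2 * wstar j)
      (C * (deriv (theta w) tstar + tstar * deriv (deriv (theta w)) tstar)) :=
    hasSum_sq_mul_of_eq_mul_pow_sub_one hwstarj
      (hasSum_derivCoeffs_mul_pow hr ht) (hasSum_derivCoeffs_derivCoeffs_mul_pow hr ht)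
  rw [hvar.tsum_eq, hC]
  field_simp
  ring

/-- The variance `(σ*)² = ∑ j² w*_j − 1` of the α-shifted offspring distribution
equals `t* θ''(t*) / θ'(t*)`. -/
theorem alpha_shift_variance
    (w : ℕ → ℝ)
    (hw_nonneg : ∀ i, 0 ≤ w i)
    (hw_sum : ∑' i : ℕ, w i = 1)
    (hw_mean : ∑' i : ℕ, (i : ℝ) * w i = 1)
    (hw_one : w 1 ≠ 1)
    (hw_tail : ∃ a > 0, Summable fun i : ℕ => w i * Real.exp (a * i))
    (ρ : ℝ) (hρ : 1 ≤ ρ)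
    (hρ_sum : ∀ t : ℝ, 0 ≤ t → t < ρ → Summable fun i : ℕ => w i * t ^ i)
    (α : ℝ) (hα0 : 0 < α) (hα1 : α < 1)
    (tstar : ℝ) (htstar : tstar ∈ Set.Ioo (0 : ℝ) ρ)
    (C : ℝ) (hCpos : 0 < C)
    (heq : (1 - α) * tstar * deriv (theta w) tstar = theta w tstar - w 0)
    (hC : C = 1 / deriv (theta w) tstar)
    (wstar : ℕ → ℝ)
    (hwstar0 : wstar 0 = α)
    (hwstarj : ∀ j : ℕ, 1 ≤ j → wstar j = C * w j * tstar ^ (j - 1))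
    (hwstar_sum : ∑' j : ℕ, wstar j = 1)
    (hwstar_mean : ∑' j : ℕ, (j : ℝ) * wstar j = 1) :
    (∑' j : ℕ, (j : ℝ) ^ 2 * wstar j) - 1 =
      tstar * deriv (deriv (theta w)) tstar / deriv (theta w) tstar :=
  alpha_shift_variance_general w ρ hρ_sum tstar htstar C hCpos hC wstar hwstarj
end

section
/- Let n ≥ 1 and let y_1, …, y_n be nonnegative integers with ∑_{i=1}^n y_i = n − 1. Then there is exactly one r ∈ {0, 1, …, n−1} such that the cyclic shift (y'_1, …, y'_n) := (y_{r+1}, …, y_n, y_1, …, y_r) is a Łukasiewicz word, i.e. satisfies ∑_{i=1}^{j} (y'_i − 1) ≥ 0 for every 1 ≤ j ≤ n − 1. -/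
/-!
Write `S j = ∑_{i<j} (y (i mod n) - 1)` for the partial sums of the periodically extended
sequence. Periodicity and total sum `-1` give `S (j + n) = S j - 1`, and the partial sums of the
shift by `r` are `S (r + j) - S r`. Hence the shift by `r` is a Łukasiewicz word exactly when
`S r` is a minimum of `S` on `[0, n)` that is strictly smaller than all earlier values: later
values are compared directly, earlier ones after one period, at the cost of `1`. There is exactly
one such position, the first place where the minimum is attained.
-/

open Finset

def IsFirstMinOn {α : Type*} [LinearOrder α] (S : ℕ → α) (n r : ℕ) : Prop :=
  r < n ∧ ∀ k < n, S r ≤ S k ∧ (k < r → S r < S k)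

theorem IsFirstMinOn.eq {α : Type*} [LinearOrder α] {S : ℕ → α} {n r r' : ℕ}
    (h : IsFirstMinOn S n r) (h' : IsFirstMinOn S n r') : r = r' := by
  by_contra hne
  rcases Nat.lt_or_gt_of_ne hne with hlt | hlt
  · exact (h.2 r' h'.1).1.not_gt ((h'.2 r h.1).2 hlt)
  · exact (h'.2 r h.1).1.not_gt ((h.2 r' h'.1).2 hlt)

theorem existsUnique_isFirstMinOn {α : Type*} [LinearOrder α] (S : ℕ → α) {n : ℕ}
    (hn : 0 < n) : ∃! r, IsFirstMinOn S n r := by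
  obtain ⟨m, hm, hmin⟩ := (range n).exists_min_image S (nonempty_range_iff.mpr hn.ne')
  have hex : ∃ r, r < n ∧ S r = S m := ⟨m, mem_range.mp hm, rfl⟩
  obtain ⟨hrn, hrm⟩ := Nat.find_spec hex
  have hle : ∀ k < n, S (Nat.find hex) ≤ S k := fun k hk =>
    hrm.le.trans (hmin k (mem_range.mpr hk))
  have hfirst : IsFirstMinOn S n (Nat.find hex) := ⟨hrn, fun k hk => ⟨hle k hk, fun hkr =>
    (hle k hk).lt_of_ne fun h => Nat.find_min hex hkr ⟨hk, h.symm.trans hrm⟩⟩⟩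
  exact ⟨_, hfirst, fun r h => h.eq hfirst⟩

theorem le_add_iff_isFirstMinOn {S : ℕ → ℤ} {n r : ℕ} (hS : ∀ j, S (j + n) = S j - 1)
    (hr : r < n) :
    (∀ j, 1 ≤ j → j ≤ n - 1 → S r ≤ S (r + j)) ↔ IsFirstMinOn S n r := by
  refine ⟨fun h => ⟨hr, fun k hk => ?_⟩, fun ⟨_, hmin⟩ j hj₁ hj₂ => ?_⟩
  · have hlt : k < r → S r < S k := fun hkr => by
      have := h (k + n - r) (by omega) (by omega)
      rw [show r + (k + n - r) = k + n by omega, hS] at this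
      omega
    refine ⟨?_, hlt⟩
    rcases lt_trichotomy k r with hkr | rfl | hrk
    · exact (hlt hkr).le
    · exact le_rfl
    · simpa [Nat.add_sub_cancel' hrk.le] using h (k - r) (by omega) (by omega)
  · by_cases hrj : r + j < n
    · exact (hmin _ hrj).1
    · have := (hmin (r + j - n) (by omega)).2 (by omega)
      rw [show r + j = r + j - n + n by omega, hS]
      omega

theorem sum_range_add_of_periodic {M : Type*} [AddCommMonoid M] {f : ℕ → M} {n : ℕ}
    (hf : Function.Periodic f n) (j : ℕ) :
    ∑ i ∈ range (n + j), f i = ∑ i ∈ range n, f i + ∑ i ∈ range j, f i := by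
  rw [sum_range_add]
  congr 1
  exact sum_congr rfl fun i _ => by rw [add_comm, hf]

/-- **Cycle lemma.** If `y_0, …, y_{n-1}` are nonnegative integers with total sum
`n - 1`, then there is exactly one cyclic shift `r ∈ {0, …, n-1}` for which the
shifted sequence `y'_i = y_{(r+i) mod n}` is a Łukasiewicz word, i.e. all proper
partial sums of `y'_i − 1` are nonnegative. -/
theorem cycle_lemma
    (n : ℕ) (hn : 1 ≤ n) (y : ℕ → ℕ)
    (hsum : (∑ i ∈ Finset.range n, y i) = n - 1) :
    ∃! r : ℕ, r < n ∧ ∀ j : ℕ, 1 ≤ j → j ≤ n - 1 →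
      0 ≤ ∑ i ∈ Finset.range j, ((y ((r + i) % n) : ℤ) - 1) := by
  set f : ℕ → ℤ := fun i => (y (i % n) : ℤ) - 1
  set S : ℕ → ℤ := fun j => ∑ i ∈ range j, f i
  have hf : Function.Periodic f n := fun i => by simp [f]
  have hSn : S n = -1 := by
    have : ∑ i ∈ range n, (y i : ℤ) = n - 1 := by rw [← Nat.cast_sum, hsum]; omega
    simp only [S, f, sum_sub_distrib, sum_const, card_range]
    rw [sum_congr rfl fun i hi => by rw [Nat.mod_eq_of_lt (mem_range.mp hi)], this]
    simp
  have hS : ∀ j, S (j + n) = S j - 1 := fun j => by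
    simp only [S, add_comm j, sum_range_add_of_periodic hf]
    rw [show ∑ i ∈ range n, f i = -1 from hSn]
    ring
  have hshift : ∀ r j, ∑ i ∈ range j, ((y ((r + i) % n) : ℤ) - 1) = S (r + j) - S r :=
    fun r j => (sum_range_add_sub_sum_range f r j).symm
  refine (existsUnique_congr fun r => ?_).mpr (existsUnique_isFirstMinOn S hn)
  simp only [hshift, sub_nonneg]
  exact ⟨fun ⟨hr, h⟩ => (le_add_iff_isFirstMinOn hS hr).mp h,
    fun h => ⟨h.1, (le_add_iff_isFirstMinOn hS h.1).mpr h⟩⟩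
end

section
/- Let ξ be a nonnegative integer-valued random variable with E[e^{α·ξ}] < ∞ for some α > 0 and mean a = E[ξ], and let (A_N)_{N≥1} be positive numbers with A_N ≥ c·N^ε for some constants c, ε > 0. With a_N = E[ξ^{(A_N)}], for every r > 0 one has N^r·(a_N − a) → 0 as N → ∞. -/
open Filter Topology
open scoped Classical

/-- The truncated distribution: `P(ξ^{(A)} = j) = P(ξ = j | ξ ≤ A)`. -/
noncomputable def pTrunc (p : ℕ → ℝ) (A : ℝ) (j : ℕ) : ℝ :=
  if (j : ℝ) ≤ A then p j / ∑' l : ℕ, (if (l : ℝ) ≤ A then p l else 0) else 0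

lemma my_tail_bound (g : ℕ → ℝ) (hg : ∀ j, 0 ≤ g j) {β : ℝ} (hβ : 0 < β)
    (hsum : Summable fun j : ℕ => g j * Real.exp (β * j)) (A : ℝ) :
    ∑' j : ℕ, (if (j : ℝ) ≤ A then 0 else g j) ≤
      Real.exp (-(β * A)) * ∑' j : ℕ, g j * Real.exp (β * j) := by
  have hsumg : Summable g := by
    apply Summable.of_nonneg_of_le hg _ hsum
    intro j
    exact le_mul_of_one_le_right (hg j) (Real.one_le_exp (by positivity))
  have hle : ∀ j : ℕ, (if (j : ℝ) ≤ A then 0 else g j) ≤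
      Real.exp (-(β * A)) * (g j * Real.exp (β * j)) := by
    intro j
    by_cases h : (j : ℝ) ≤ A
    · simp only [h, if_true]
      have := hg j; positivity
    · simp only [h, if_false]
      push_neg at h
      have h1 : Real.exp (β * A) ≤ Real.exp (β * j) :=
        Real.exp_le_exp.2 (mul_le_mul_of_nonneg_left h.le hβ.le)
      calc g j = Real.exp (-(β * A)) * (Real.exp (β * A) * g j) := by
              rw [← mul_assoc, ← Real.exp_add]; simp
        _ ≤ Real.exp (-(β * A)) * (g j * Real.exp (β * j)) := by
              apply mul_le_mul_of_nonneg_left _ (Real.exp_pos _).le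
              rw [mul_comm (g j)]
              exact mul_le_mul_of_nonneg_right h1 (hg j)
  rw [← tsum_mul_left]
  apply Summable.tsum_le_tsum hle _ (hsum.mul_left _)
  apply Summable.of_nonneg_of_le _ _ hsumg
  · intro j; by_cases h : (j:ℝ) ≤ A <;> simp [h, hg j]
  · intro j; by_cases h : (j:ℝ) ≤ A <;> simp [h, hg j]

lemma my_aux_tendsto (r ε b : ℝ) (hε : 0 < ε) (hb : 0 < b) :
    Tendsto (fun N : ℕ => (N : ℝ) ^ r * Real.exp (-b * (N : ℝ) ^ ε)) atTop (nhds 0) := by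
  have h1 : Tendsto (fun N : ℕ => (N : ℝ) ^ ε) atTop atTop :=
    (tendsto_rpow_atTop hε).comp tendsto_natCast_atTop_atTop
  have h2 := (tendsto_rpow_mul_exp_neg_mul_atTop_nhds_zero (r / ε) b hb).comp h1
  apply h2.congr'
  filter_upwards [eventually_ge_atTop 1] with N hN
  have hN0 : (0 : ℝ) ≤ (N : ℝ) := Nat.cast_nonneg N
  simp only [Function.comp]
  rw [← Real.rpow_mul hN0, mul_div_cancel₀ r hε.ne']

lemma my_split (f : ℕ → ℝ) (hf : ∀ j, 0 ≤ f j) (hsum : Summable f) (A : ℝ) :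
    (∑' j : ℕ, if (j : ℝ) ≤ A then f j else 0) =
      (∑' j : ℕ, f j) - ∑' j : ℕ, (if (j : ℝ) ≤ A then 0 else f j) := by
  have h1 : Summable (fun j : ℕ => if (j : ℝ) ≤ A then f j else 0) := by
    apply Summable.of_nonneg_of_le _ _ hsum <;>
      · intro j; by_cases h : (j:ℝ) ≤ A <;> simp [h, hf j]
  have h2 : Summable (fun j : ℕ => if (j : ℝ) ≤ A then 0 else f j) := by
    apply Summable.of_nonneg_of_le _ _ hsum <;>
      · intro j; by_cases h : (j:ℝ) ≤ A <;> simp [h, hf j]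
  have := Summable.tsum_add h1 h2
  have heq : ∀ j : ℕ, (if (j : ℝ) ≤ A then f j else 0) + (if (j : ℝ) ≤ A then 0 else f j) = f j := by
    intro j; by_cases h : (j:ℝ) ≤ A <;> simp [h]
  rw [tsum_congr heq] at this
  linarith
/-- If `ξ` has exponential moments and mean `a`, and `A_N ≥ c N^ε`, then with
`a_N = E[ξ^{(A_N)}]` one has `N^r (a_N − a) → 0` for every `r > 0`. -/
theorem trunc_mean_converges_fast
    (p : ℕ → ℝ)
    (hp_nonneg : ∀ j, 0 ≤ p j)
    (hp_sum : ∑' j : ℕ, p j = 1)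
    (hp_tail : ∃ α > 0, Summable fun j : ℕ => p j * Real.exp (α * j))
    (a : ℝ) (ha : a = ∑' j : ℕ, (j : ℝ) * p j)
    (A : ℕ → ℝ) (hApos : ∀ N, 0 < A N)
    (hA : ∃ c > 0, ∃ ε > 0, ∀ N : ℕ, 1 ≤ N → c * (N : ℝ) ^ ε ≤ A N) :
    ∀ r : ℝ, 0 < r →
      Tendsto (fun N : ℕ =>
          (N : ℝ) ^ r * ((∑' j : ℕ, (j : ℝ) * pTrunc p (A N) j) - a))
        atTop (nhds 0) := by
  intro r hr
  obtain ⟨α, hα, hαsum⟩ := hp_tail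
  obtain ⟨c, hc, ε, hε, hcA⟩ := hA
  set β : ℝ := α / 2 with hβdef
  have hβ : 0 < β := by positivity
  -- summability facts
  have hsump : Summable p := by
    apply Summable.of_nonneg_of_le hp_nonneg _ hαsum
    intro j
    exact le_mul_of_one_le_right (hp_nonneg j) (Real.one_le_exp (by positivity))
  have hsumpβ : Summable (fun j : ℕ => p j * Real.exp (β * j)) := by
    apply Summable.of_nonneg_of_le _ _ hαsum
    · intro j; exact mul_nonneg (hp_nonneg j) (Real.exp_pos _).le
    · intro j
      apply mul_le_mul_of_nonneg_left _ (hp_nonneg j)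
      apply Real.exp_le_exp.2
      have : (0:ℝ) ≤ (j:ℝ) := Nat.cast_nonneg j
      nlinarith
  have hjle : ∀ j : ℕ, (j : ℝ) ≤ Real.exp (β * j) / β := by
    intro j
    rw [le_div_iff₀ hβ]
    have := Real.add_one_le_exp (β * j)
    have : (0:ℝ) ≤ (j:ℝ) := Nat.cast_nonneg j
    nlinarith [Real.add_one_le_exp (β * j)]
  have hsumjβ : Summable (fun j : ℕ => (j : ℝ) * p j * Real.exp (β * j)) := by
    apply Summable.of_nonneg_of_le _ _ (hαsum.mul_left (1 / β))
    · intro j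
      exact mul_nonneg (mul_nonneg (Nat.cast_nonneg j) (hp_nonneg j)) (Real.exp_pos _).le
    · intro j
      have hexp : Real.exp (β * j) * Real.exp (β * j) = Real.exp (α * j) := by
        rw [← Real.exp_add]; congr 1; rw [hβdef]; ring
      calc (j : ℝ) * p j * Real.exp (β * j)
          ≤ (Real.exp (β * j) / β) * p j * Real.exp (β * j) := by
            apply mul_le_mul_of_nonneg_right _ (Real.exp_pos _).le
            exact mul_le_mul_of_nonneg_right (hjle j) (hp_nonneg j)
        _ = 1 / β * (p j * Real.exp (α * j)) := by
            rw [← hexp]; ring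
  have hsumj : Summable (fun j : ℕ => (j : ℝ) * p j) := by
    apply Summable.of_nonneg_of_le _ _ hsumjβ
    · intro j; exact mul_nonneg (Nat.cast_nonneg j) (hp_nonneg j)
    · intro j
      exact le_mul_of_one_le_right (mul_nonneg (Nat.cast_nonneg j) (hp_nonneg j))
        (Real.one_le_exp (by positivity))
  have ha0 : 0 ≤ a := by
    rw [ha]
    exact tsum_nonneg fun j => mul_nonneg (Nat.cast_nonneg j) (hp_nonneg j)
  set K0 : ℝ := ∑' j : ℕ, p j * Real.exp (β * j) with hK0
  set K1 : ℝ := ∑' j : ℕ, (j : ℝ) * p j * Real.exp (β * j) with hK1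
  have hK0nn : 0 ≤ K0 := tsum_nonneg fun j =>
    mul_nonneg (hp_nonneg j) (Real.exp_pos _).le
  have hK1nn : 0 ≤ K1 := tsum_nonneg fun j =>
    mul_nonneg (mul_nonneg (Nat.cast_nonneg j) (hp_nonneg j)) (Real.exp_pos _).le
  -- tail remainders
  set R0 : ℕ → ℝ := fun N => ∑' j : ℕ, (if (j : ℝ) ≤ A N then 0 else p j) with hR0
  set R1 : ℕ → ℝ := fun N => ∑' j : ℕ, (if (j : ℝ) ≤ A N then 0 else (j : ℝ) * p j) with hR1
  have hR0nn : ∀ N, 0 ≤ R0 N := fun N => tsum_nonneg fun j => by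
    by_cases h : (j:ℝ) ≤ A N <;> simp [h, hp_nonneg j]
  have hR1nn : ∀ N, 0 ≤ R1 N := fun N => tsum_nonneg fun j => by
    by_cases h : (j:ℝ) ≤ A N <;>
      simp [h, mul_nonneg (Nat.cast_nonneg j) (hp_nonneg j)]
  have hcN : ∀ N : ℕ, 1 ≤ N → c * (N : ℝ) ≤ A N := by
    intro N hN
    refine le_trans ?_ (hcA N hN)
    have h1 : (1:ℝ) ≤ (N:ℝ) := by exact_mod_cast hN
    have : (N:ℝ) ≤ (N:ℝ) ^ ε := le_self_pow₀ h1 hε.ne'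
    nlinarith
  set E : ℕ → ℝ := fun N => Real.exp (-(β * c) * (N : ℝ)) with hE
  have hEpos : ∀ N, 0 < E N := fun N => Real.exp_pos _
  have hR0le : ∀ N : ℕ, 1 ≤ N → R0 N ≤ E N * K0 := by
    intro N hN
    refine le_trans (my_tail_bound p hp_nonneg hβ hsumpβ (A N)) ?_
    apply mul_le_mul_of_nonneg_right _ hK0nn
    apply Real.exp_le_exp.2
    have := hcN N hN
    nlinarith
  have hR1le : ∀ N : ℕ, 1 ≤ N → R1 N ≤ E N * K1 := by
    intro N hN
    refine le_trans (my_tail_bound (fun j => (j : ℝ) * p j)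
      (fun j => mul_nonneg (Nat.cast_nonneg j) (hp_nonneg j)) hβ hsumjβ (A N)) ?_
    apply mul_le_mul_of_nonneg_right _ hK1nn
    apply Real.exp_le_exp.2
    have := hcN N hN
    nlinarith
  -- S and T identities
  have hS : ∀ N : ℕ, (∑' l : ℕ, if (l : ℝ) ≤ A N then p l else 0) = 1 - R0 N := by
    intro N
    rw [my_split p hp_nonneg hsump (A N), hp_sum]
  have hT : ∀ N : ℕ, (∑' j : ℕ, if (j : ℝ) ≤ A N then (j : ℝ) * p j else 0) = a - R1 N := by
    intro N
    rw [my_split (fun j => (j : ℝ) * p j)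
      (fun j => mul_nonneg (Nat.cast_nonneg j) (hp_nonneg j)) hsumj (A N), ha]
  -- truncated mean as a quotient
  have hmean : ∀ N : ℕ, (∑' j : ℕ, (j : ℝ) * pTrunc p (A N) j) =
      (a - R1 N) / (1 - R0 N) := by
    intro N
    rw [← hT N, ← hS N]
    unfold pTrunc
    rw [← tsum_div_const]
    apply tsum_congr
    intro j
    by_cases h : (j : ℝ) ≤ A N <;> simp [h, mul_div_assoc]
  -- eventual smallness of the tail
  have base : ∀ r' : ℝ, Tendsto (fun N : ℕ =>
      (N : ℝ) ^ r' * Real.exp (-(β * c) * (N : ℝ))) atTop (nhds 0) := by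
    intro r'
    have := my_aux_tendsto r' 1 (β * c) one_pos (by positivity)
    apply this.congr
    intro N
    rw [Real.rpow_one]
  have htend0 : Tendsto (fun N : ℕ => E N * K0) atTop (nhds 0) := by
    have := (base 0).mul_const K0
    rw [zero_mul] at this
    apply this.congr
    intro N
    rw [Real.rpow_zero, one_mul]
  have hhalf : ∀ᶠ N : ℕ in atTop, E N * K0 ≤ 1 / 2 := by
    have := htend0.eventually (eventually_le_nhds (by norm_num : (0:ℝ) < 1/2))
    exact this
  -- final squeeze
  have hg : Tendsto (fun N : ℕ => (2 * (a * K0 + K1)) *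
      ((N : ℝ) ^ r * Real.exp (-(β * c) * (N : ℝ)))) atTop (nhds 0) := by
    have := (base r).const_mul (2 * (a * K0 + K1))
    simpa using this
  apply squeeze_zero_norm' _ hg
  filter_upwards [eventually_ge_atTop 1, hhalf] with N hN hNhalf
  have hR0half : R0 N ≤ 1 / 2 := le_trans (hR0le N hN) hNhalf
  have hSpos : (1:ℝ) / 2 ≤ 1 - R0 N := by linarith
  have hSpos' : (0:ℝ) < 1 - R0 N := by linarith
  rw [hmean N]
  have hdiff : (a - R1 N) / (1 - R0 N) - a = (a * R0 N - R1 N) / (1 - R0 N) := by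
    field_simp
    ring
  rw [hdiff]
  have habs : |(a * R0 N - R1 N) / (1 - R0 N)| ≤ 2 * (a * R0 N + R1 N) := by
    rw [abs_div, abs_of_pos hSpos']
    rw [div_le_iff₀ hSpos']
    have h1 : |a * R0 N - R1 N| ≤ a * R0 N + R1 N := by
      rw [abs_sub_le_iff]
      constructor
      · have := hR1nn N; have := mul_nonneg ha0 (hR0nn N); linarith
      · have := hR1nn N; have := mul_nonneg ha0 (hR0nn N); linarith
    have h2 : 2 * (a * R0 N + R1 N) * (1 / 2) ≤ 2 * (a * R0 N + R1 N) * (1 - R0 N) := by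
      apply mul_le_mul_of_nonneg_left hSpos
      have := hR1nn N; have := mul_nonneg ha0 (hR0nn N); linarith
    linarith
  have hbound : a * R0 N + R1 N ≤ (a * K0 + K1) * E N := by
    have h1 := mul_le_mul_of_nonneg_left (hR0le N hN) ha0
    have h2 := hR1le N hN
    nlinarith [hEpos N]
  have hNr : (0:ℝ) ≤ (N : ℝ) ^ r := Real.rpow_nonneg (Nat.cast_nonneg N) r
  rw [Real.norm_eq_abs, abs_mul, abs_of_nonneg hNr]
  calc (N:ℝ) ^ r * |(a * R0 N - R1 N) / (1 - R0 N)|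
      ≤ (N:ℝ) ^ r * (2 * (a * R0 N + R1 N)) := by
        exact mul_le_mul_of_nonneg_left habs hNr
    _ ≤ (N:ℝ) ^ r * (2 * ((a * K0 + K1) * E N)) := by
        apply mul_le_mul_of_nonneg_left _ hNr
        linarith
    _ = 2 * (a * K0 + K1) * ((N:ℝ) ^ r * Real.exp (-(β * c) * (N : ℝ))) := by
        rw [hE]; ring
end

section
/- Let ξ be a nonnegative integer-valued random variable with E[e^{α·ξ}] < ∞ for some α > 0, mean a and variance σ² > 0, and let (A_N)_{N≥1} be positive numbers with A_N ≥ c·N^ε for some constants c, ε > 0. Let f̃_N(t) = E[ exp( i·t·(ξ^{(A_N)} − a_N) ) ] be the characteristic function of the centered truncated variable, where a_N = E[ξ^{(A_N)}]. Then there exist ε' > 0 and N₀ such that for all real t with |t| < ε' and all N > N₀: | f̃_N(t) | ≤ exp( −σ²·t²/4 ). -/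
open Filter Topology
open scoped Classical

/-- Mean of the truncated variable `ξ^{(A)}`. -/
noncomputable def truncMean (p : ℕ → ℝ) (A : ℝ) : ℝ :=
  ∑' j : ℕ, (j : ℝ) * pTrunc p A j

/-- The characteristic function `f̃_N(t) = E[exp(i t (ξ^{(A_N)} − a_N))]` of the
centered truncated variable. -/
noncomputable def charTrunc (p : ℕ → ℝ) (A : ℝ) (t : ℝ) : ℂ :=
  ∑' j : ℕ, (pTrunc p A j : ℂ) *
    Complex.exp (Complex.I * (t : ℂ) * (((j : ℝ) - truncMean p A : ℝ) : ℂ))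

/-! Writing `q` for the truncated distribution, `‖f̃(t)‖²` is the characteristic function of the
symmetrised variable, `∑ⱼ ∑ₖ qⱼ qₖ cos (t (j - k))`. The bound `cos y ≤ 1 - y²/2 + |y|³` turns this
into `1 - t² Var q + 8 |t|³ E_q |ξ|³`. As the truncation level tends to infinity the variance of `q`
tends to `σ²` and its third moment to that of `ξ`, which is finite by the exponential moment;
so for small `|t|` the bound is at most `1 - σ² t² / 2 ≤ exp (-σ² t² / 2)`. -/

lemma Real.cos_le_one_sub_sq_div_two_add_abs_pow_three (y : ℝ) :
    Real.cos y ≤ 1 - y ^ 2 / 2 + |y| ^ 3 := by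
  rcases le_or_gt |y| 1 with h | h
  · have h1 := abs_sub_le_iff.1 (Real.cos_bound h)
    have h4 : |y| ^ 4 ≤ |y| ^ 3 := pow_le_pow_of_le_one (abs_nonneg y) h (by norm_num)
    nlinarith [sq_abs y]
  · have h2 : |y| ^ 2 ≤ |y| ^ 3 := pow_le_pow_right₀ h.le (by norm_num)
    nlinarith [sq_abs y, Real.cos_le_one y]

lemma abs_sub_pow_three_le (u v : ℝ) : |u - v| ^ 3 ≤ 4 * (|u| ^ 3 + |v| ^ 3) := by
  have hu := abs_nonneg u
  have hv := abs_nonneg v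
  calc |u - v| ^ 3 ≤ (|u| + |v|) ^ 3 := by gcongr; exact abs_sub _ _
    _ ≤ 4 * (|u| ^ 3 + |v| ^ 3) := by
      nlinarith [sq_nonneg (|u| - |v|), mul_nonneg hu hv]

section FiniteDistribution

variable {ι : Type*} (s : Finset ι) (q : ι → ℝ)

lemma norm_sum_mul_exp_mul_I_sq (θ : ι → ℝ) :
    ‖∑ i ∈ s, (q i : ℂ) * Complex.exp (θ i * Complex.I)‖ ^ 2 =
      ∑ i ∈ s, ∑ j ∈ s, q i * q j * Real.cos (θ i - θ j) := by
  have hre : (∑ i ∈ s, (q i : ℂ) * Complex.exp (θ i * Complex.I)).re =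
      ∑ i ∈ s, q i * Real.cos (θ i) := by
    simp [Complex.re_sum, Complex.exp_ofReal_mul_I_re]
  have him : (∑ i ∈ s, (q i : ℂ) * Complex.exp (θ i * Complex.I)).im =
      ∑ i ∈ s, q i * Real.sin (θ i) := by
    simp [Complex.im_sum, Complex.exp_ofReal_mul_I_im]
  rw [Complex.sq_norm, Complex.normSq_apply, hre, him, Finset.sum_mul_sum, Finset.sum_mul_sum,
    ← Finset.sum_add_distrib]
  refine Finset.sum_congr rfl fun i _ => ?_
  rw [← Finset.sum_add_distrib]
  refine Finset.sum_congr rfl fun j _ => ?_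
  rw [Real.cos_sub]
  ring

variable (x : ι → ℝ)

lemma sum_sum_mul_mul_sub_sq :
    ∑ i ∈ s, ∑ j ∈ s, q i * q j * (x i - x j) ^ 2 =
      2 * ((∑ i ∈ s, q i) * ∑ i ∈ s, x i ^ 2 * q i - (∑ i ∈ s, x i * q i) ^ 2) := by
  have h : ∀ i j, q i * q j * (x i - x j) ^ 2 =
      x i ^ 2 * q i * q j + q i * (x j ^ 2 * q j) - 2 * (x i * q i * (x j * q j)) :=
    fun i j => by ring
  simp_rw [h, Finset.sum_sub_distrib, Finset.sum_add_distrib, ← Finset.mul_sum, ← Finset.sum_mul]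
  ring

lemma sum_sum_mul_mul_abs_sub_pow_three_le (hq : ∀ i ∈ s, 0 ≤ q i) :
    ∑ i ∈ s, ∑ j ∈ s, q i * q j * |x i - x j| ^ 3 ≤
      8 * (∑ i ∈ s, q i) * ∑ i ∈ s, |x i| ^ 3 * q i := by
  calc ∑ i ∈ s, ∑ j ∈ s, q i * q j * |x i - x j| ^ 3
      ≤ ∑ i ∈ s, ∑ j ∈ s, q i * q j * (4 * (|x i| ^ 3 + |x j| ^ 3)) := by
        gcongr with i hi j hj
        · exact mul_nonneg (hq i hi) (hq j hj)
        · exact abs_sub_pow_three_le _ _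
    _ = 8 * (∑ i ∈ s, q i) * ∑ i ∈ s, |x i| ^ 3 * q i := by
        have h : ∀ i j, q i * q j * (4 * (|x i| ^ 3 + |x j| ^ 3)) =
            4 * (|x i| ^ 3 * q i * q j + q i * (|x j| ^ 3 * q j)) := fun i j => by ring
        simp_rw [h, ← Finset.mul_sum, Finset.sum_add_distrib, ← Finset.mul_sum, ← Finset.sum_mul]
        ring

lemma sum_sum_mul_mul_cos_le (hq : ∀ i ∈ s, 0 ≤ q i) (hq1 : ∑ i ∈ s, q i = 1) (t : ℝ) :
    ∑ i ∈ s, ∑ j ∈ s, q i * q j * Real.cos (t * (x i - x j)) ≤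
      1 - t ^ 2 * (∑ i ∈ s, x i ^ 2 * q i - (∑ i ∈ s, x i * q i) ^ 2) +
        8 * |t| ^ 3 * ∑ i ∈ s, |x i| ^ 3 * q i := by
  calc ∑ i ∈ s, ∑ j ∈ s, q i * q j * Real.cos (t * (x i - x j))
      ≤ ∑ i ∈ s, ∑ j ∈ s, (q i * q j - t ^ 2 / 2 * (q i * q j * (x i - x j) ^ 2) +
          |t| ^ 3 * (q i * q j * |x i - x j| ^ 3)) := by
        gcongr with i hi j hj
        calc q i * q j * Real.cos (t * (x i - x j))
            ≤ q i * q j * (1 - (t * (x i - x j)) ^ 2 / 2 + |t * (x i - x j)| ^ 3) :=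
              mul_le_mul_of_nonneg_left (Real.cos_le_one_sub_sq_div_two_add_abs_pow_three _)
                (mul_nonneg (hq i hi) (hq j hj))
          _ = _ := by rw [abs_mul]; ring
    _ ≤ _ := by
        simp_rw [Finset.sum_add_distrib, Finset.sum_sub_distrib, ← Finset.mul_sum,
          ← Finset.sum_mul, sum_sum_mul_mul_sub_sq, hq1]
        have := sum_sum_mul_mul_abs_sub_pow_three_le s q x hq
        rw [hq1] at this
        nlinarith [pow_nonneg (abs_nonneg t) 3]

end FiniteDistribution

lemma summable_pow_mul_of_summable_mul_exp {p : ℕ → ℝ} (hp : ∀ j, 0 ≤ p j) {α : ℝ} (hα : 0 < α)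
    (hexp : Summable fun j : ℕ => p j * Real.exp (α * j)) (k : ℕ) :
    Summable fun j : ℕ => (j : ℝ) ^ k * p j := by
  refine .of_nonneg_of_le (fun j => mul_nonneg (by positivity) (hp j)) (fun j => ?_)
    (hexp.mul_left (k.factorial / α ^ k))
  have hpow : (j : ℝ) ^ k ≤ k.factorial / α ^ k * Real.exp (α * j) := by
    rw [div_mul_eq_mul_div, le_div_iff₀ (by positivity), ← mul_pow, mul_comm _ α,
      ← div_le_iff₀' (by positivity)]
    exact Real.pow_div_factorial_le_exp _ (by positivity) k
  calc (j : ℝ) ^ k * p j ≤ k.factorial / α ^ k * Real.exp (α * j) * p j := by gcongr; exact hp j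
    _ = _ := by ring

lemma tsum_sub_sq_mul_eq {β : Type*} {p x : β → ℝ} (hp : Summable p) (hp1 : ∑' j, p j = 1)
    (hx : Summable fun j => x j * p j) (hx2 : Summable fun j => x j ^ 2 * p j) :
    ∑' j, (x j - ∑' i, x i * p i) ^ 2 * p j =
      ∑' j, x j ^ 2 * p j - (∑' j, x j * p j) ^ 2 := by
  set m := ∑' i, x i * p i
  have h : ∀ j, (x j - m) ^ 2 * p j = x j ^ 2 * p j - 2 * m * (x j * p j) + m ^ 2 * p j :=
    fun j => by ring
  rw [tsum_congr h, (hx2.sub (hx.mul_left _)).tsum_add (hp.mul_left _),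
    hx2.tsum_sub (hx.mul_left _), tsum_mul_left, tsum_mul_left, hp1]
  ring

lemma tendsto_atTop_of_mul_pow_le {A : ℕ → ℝ} {c : ℝ} {k : ℕ} (hc : 0 < c) (hk : k ≠ 0)
    (h : ∀ᶠ N : ℕ in atTop, c * (N : ℝ) ^ k ≤ A N) : Tendsto A atTop atTop :=
  tendsto_atTop_mono' _ h
    (((tendsto_pow_atTop hk).comp tendsto_natCast_atTop_atTop).const_mul_atTop hc)

section Truncation

variable (p : ℕ → ℝ) {A : ℝ}

lemma mem_range_floor_add_one_iff (hA : 0 ≤ A) {j : ℕ} :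
    j ∈ Finset.range (⌊A⌋₊ + 1) ↔ (j : ℝ) ≤ A := by
  rw [Finset.mem_range, Nat.lt_add_one_iff, Nat.le_floor_iff hA]

lemma tsum_ite_le_eq_sum_range (g : ℕ → ℝ) (hA : 0 ≤ A) :
    ∑' j : ℕ, (if (j : ℝ) ≤ A then g j else 0) = ∑ j ∈ Finset.range (⌊A⌋₊ + 1), g j := by
  rw [tsum_eq_sum fun j hj => if_neg (mt (mem_range_floor_add_one_iff hA).2 hj)]
  exact Finset.sum_congr rfl fun j hj => if_pos ((mem_range_floor_add_one_iff hA).1 hj)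

lemma pTrunc_of_notMem (hA : 0 ≤ A) {j : ℕ} (hj : j ∉ Finset.range (⌊A⌋₊ + 1)) :
    pTrunc p A j = 0 :=
  if_neg (mt (mem_range_floor_add_one_iff hA).2 hj)

lemma pTrunc_of_mem (hA : 0 ≤ A) {j : ℕ} (hj : j ∈ Finset.range (⌊A⌋₊ + 1)) :
    pTrunc p A j = p j / ∑ l ∈ Finset.range (⌊A⌋₊ + 1), p l := by
  rw [pTrunc, if_pos ((mem_range_floor_add_one_iff hA).1 hj), tsum_ite_le_eq_sum_range p hA]

lemma sum_mul_pTrunc (hA : 0 ≤ A) (g : ℕ → ℝ) :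
    ∑ j ∈ Finset.range (⌊A⌋₊ + 1), g j * pTrunc p A j =
      (∑ j ∈ Finset.range (⌊A⌋₊ + 1), g j * p j) / ∑ j ∈ Finset.range (⌊A⌋₊ + 1), p j := by
  rw [Finset.sum_div]
  exact Finset.sum_congr rfl fun j hj => by rw [pTrunc_of_mem p hA hj, mul_div_assoc]

lemma sum_pTrunc_eq_one (hA : 0 ≤ A) (hS : ∑ j ∈ Finset.range (⌊A⌋₊ + 1), p j ≠ 0) :
    ∑ j ∈ Finset.range (⌊A⌋₊ + 1), pTrunc p A j = 1 := by
  simpa [div_self hS] using sum_mul_pTrunc p hA fun _ => 1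

lemma charTrunc_eq_sum (hA : 0 ≤ A) (t : ℝ) :
    charTrunc p A t = ∑ j ∈ Finset.range (⌊A⌋₊ + 1),
      (pTrunc p A j : ℂ) * Complex.exp (↑(t * (j - truncMean p A)) * Complex.I) := by
  rw [charTrunc, tsum_eq_sum fun j hj => by simp [pTrunc_of_notMem p hA hj]]
  refine Finset.sum_congr rfl fun j _ => ?_
  push_cast
  ring_nf

lemma norm_charTrunc_sq_le (hp : ∀ j, 0 ≤ p j) (hA : 0 ≤ A)
    (hS : ∑ j ∈ Finset.range (⌊A⌋₊ + 1), p j ≠ 0) (t : ℝ) :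
    ‖charTrunc p A t‖ ^ 2 ≤
      1 - t ^ 2 * (∑ j ∈ Finset.range (⌊A⌋₊ + 1), (j : ℝ) ^ 2 * pTrunc p A j -
          (∑ j ∈ Finset.range (⌊A⌋₊ + 1), (j : ℝ) * pTrunc p A j) ^ 2) +
        8 * |t| ^ 3 * ∑ j ∈ Finset.range (⌊A⌋₊ + 1), |(j : ℝ)| ^ 3 * pTrunc p A j := by
  have hq : ∀ j ∈ Finset.range (⌊A⌋₊ + 1), 0 ≤ pTrunc p A j := fun j hj => by
    rw [pTrunc_of_mem p hA hj]
    exact div_nonneg (hp j) (Finset.sum_nonneg fun l _ => hp l)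
  rw [charTrunc_eq_sum p hA, norm_sum_mul_exp_mul_I_sq]
  simp_rw [← mul_sub, sub_sub_sub_cancel_right]
  exact sum_sum_mul_mul_cos_le _ _ _ hq (sum_pTrunc_eq_one p hA hS) t

lemma tendsto_sum_range_floor_add_one {g : ℕ → ℝ} (hg : Summable g) :
    Tendsto (fun A : ℝ => ∑ j ∈ Finset.range (⌊A⌋₊ + 1), g j) atTop (𝓝 (∑' j, g j)) :=
  hg.hasSum.tendsto_sum_nat.comp ((tendsto_add_atTop_nat 1).comp tendsto_nat_floor_atTop)

lemma tendsto_sum_mul_pTrunc (hp : Summable p) (hp1 : ∑' j, p j = 1) {g : ℕ → ℝ}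
    (hg : Summable fun j => g j * p j) :
    Tendsto (fun A : ℝ => ∑ j ∈ Finset.range (⌊A⌋₊ + 1), g j * pTrunc p A j) atTop
      (𝓝 (∑' j, g j * p j)) := by
  have h := (tendsto_sum_range_floor_add_one hg).div (tendsto_sum_range_floor_add_one hp)
    (by rw [hp1]; exact one_ne_zero)
  rw [hp1, div_one] at h
  refine h.congr' ?_
  filter_upwards [eventually_ge_atTop 0] with A hA using (sum_mul_pTrunc p hA g).symm

end Truncation

lemma eventually_norm_charTrunc_le (p : ℕ → ℝ) (hp : ∀ j, 0 ≤ p j) (hp1 : ∑' j : ℕ, p j = 1)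
    (hmom : ∀ k : ℕ, Summable fun j : ℕ => (j : ℝ) ^ k * p j)
    (a : ℝ) (ha : a = ∑' j : ℕ, (j : ℝ) * p j) (σ : ℝ) (hσ : 0 < σ)
    (hvar : σ ^ 2 = ∑' j : ℕ, ((j : ℝ) - a) ^ 2 * p j) :
    ∃ ε' > 0, ∀ᶠ A in atTop, ∀ t : ℝ, |t| < ε' →
      ‖charTrunc p A t‖ ≤ Real.exp (-(σ ^ 2) * t ^ 2 / 4) := by
  have hmom0 : Summable p := by simpa using hmom 0
  have hmom1 : Summable fun j : ℕ => (j : ℝ) * p j := by simpa using hmom 1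
  have hmom3 : Summable fun j : ℕ => |(j : ℝ)| ^ 3 * p j := by simpa using hmom 3
  set m3 := ∑' j : ℕ, |(j : ℝ)| ^ 3 * p j
  have hm3 : 0 ≤ m3 := tsum_nonneg fun j => mul_nonneg (by positivity) (hp j)
  have hS := (tendsto_sum_range_floor_add_one hmom0).eventually
    (eventually_ne_nhds (hp1 ▸ one_ne_zero))
  have hV : Tendsto (fun A : ℝ => ∑ j ∈ Finset.range (⌊A⌋₊ + 1), (j : ℝ) ^ 2 * pTrunc p A j -
      (∑ j ∈ Finset.range (⌊A⌋₊ + 1), (j : ℝ) * pTrunc p A j) ^ 2) atTop (𝓝 (σ ^ 2)) := by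
    rw [hvar, ha, tsum_sub_sq_mul_eq hmom0 hp1 hmom1 (hmom 2)]
    exact (tendsto_sum_mul_pTrunc p hmom0 hp1 (hmom 2)).sub
      ((tendsto_sum_mul_pTrunc p hmom0 hp1 hmom1).pow 2)
  have hM := tendsto_sum_mul_pTrunc p hmom0 hp1 hmom3
  have hσ' : 3 * σ ^ 2 / 4 < σ ^ 2 := by nlinarith
  refine ⟨σ ^ 2 / (32 * (m3 + 1)), by positivity, ?_⟩
  filter_upwards [eventually_ge_atTop 0, hS, hV.eventually (eventually_gt_nhds hσ'),
    hM.eventually (eventually_lt_nhds (lt_add_one m3))] with A hA hSA hVA hMA t ht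
  have hcube : 8 * |t| ^ 3 * (m3 + 1) ≤ σ ^ 2 * t ^ 2 / 4 := by
    rw [lt_div_iff₀ (by positivity)] at ht
    have : |t| ^ 3 = t ^ 2 * |t| := by rw [pow_succ, sq_abs]
    nlinarith [sq_nonneg t]
  have hsq : ‖charTrunc p A t‖ ^ 2 ≤ Real.exp (-(σ ^ 2) * t ^ 2 / 4) ^ 2 :=
    calc ‖charTrunc p A t‖ ^ 2
        ≤ 1 - t ^ 2 * (3 * σ ^ 2 / 4) + 8 * |t| ^ 3 * (m3 + 1) := by
          refine (norm_charTrunc_sq_le p hp hA hSA t).trans ?_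
          gcongr
      _ ≤ -(σ ^ 2) * t ^ 2 / 2 + 1 := by linarith
      _ ≤ Real.exp (-(σ ^ 2) * t ^ 2 / 2) := Real.add_one_le_exp _
      _ = Real.exp (-(σ ^ 2) * t ^ 2 / 4) ^ 2 := by rw [← Real.exp_nat_mul]; ring_nf
  exact (pow_le_pow_iff_left₀ (norm_nonneg _) (Real.exp_pos _).le two_ne_zero).1 hsq

theorem charTrunc_bound_general
    (p : ℕ → ℝ)
    (hp_nonneg : ∀ j, 0 ≤ p j)
    (hp_sum : ∑' j : ℕ, p j = 1)
    (hp_tail : ∃ α > 0, Summable fun j : ℕ => p j * Real.exp (α * j))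
    (a : ℝ) (ha : a = ∑' j : ℕ, (j : ℝ) * p j)
    (σ : ℝ) (hσ : 0 < σ)
    (hvar : σ ^ 2 = ∑' j : ℕ, ((j : ℝ) - a) ^ 2 * p j)
    (A : ℕ → ℝ)
    (hA : ∃ c > 0, ∃ ε > 0, ∀ N : ℕ, 1 ≤ N → c * (N : ℝ) ^ ε ≤ A N) :
    ∃ ε' > 0, ∃ N₀ : ℕ, ∀ t : ℝ, |t| < ε' → ∀ N : ℕ, N₀ < N →
      ‖charTrunc p (A N) t‖ ≤ Real.exp (-(σ ^ 2) * t ^ 2 / 4) := by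
  obtain ⟨α, hα, hexp⟩ := hp_tail
  obtain ⟨c, hc, ε, hε, hcA⟩ := hA
  obtain ⟨ε', hε', hbound⟩ := eventually_norm_charTrunc_le p hp_nonneg hp_sum
    (summable_pow_mul_of_summable_mul_exp hp_nonneg hα hexp) a ha σ hσ hvar
  have hAtop := tendsto_atTop_of_mul_pow_le hc hε.ne' (eventually_atTop.2 ⟨1, hcA⟩)
  obtain ⟨N₀, hN₀⟩ := eventually_atTop.1 (hAtop.eventually hbound)
  exact ⟨ε', hε', N₀, fun t ht N hN => hN₀ N hN.le t ht⟩

/-- There exist `ε' > 0` and `N₀` such that for `|t| < ε'` and `N > N₀`,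
`|f̃_N(t)| ≤ exp(−σ² t² / 4)`. -/
theorem charTrunc_bound
    (p : ℕ → ℝ)
    (hp_nonneg : ∀ j, 0 ≤ p j)
    (hp_sum : ∑' j : ℕ, p j = 1)
    (hp_tail : ∃ α > 0, Summable fun j : ℕ => p j * Real.exp (α * j))
    (a : ℝ) (ha : a = ∑' j : ℕ, (j : ℝ) * p j)
    (σ : ℝ) (hσ : 0 < σ)
    (hvar : σ ^ 2 = ∑' j : ℕ, ((j : ℝ) - a) ^ 2 * p j)
    (A : ℕ → ℝ) (hApos : ∀ N, 0 < A N)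
    (hA : ∃ c > 0, ∃ ε > 0, ∀ N : ℕ, 1 ≤ N → c * (N : ℝ) ^ ε ≤ A N) :
    ∃ ε' > 0, ∃ N₀ : ℕ, ∀ t : ℝ, |t| < ε' → ∀ N : ℕ, N₀ < N →
      ‖charTrunc p (A N) t‖ ≤ Real.exp (-(σ ^ 2) * t ^ 2 / 4) :=
  charTrunc_bound_general p hp_nonneg hp_sum hp_tail a ha σ hσ hvar A hA
end
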